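/- The self-preemptive MGF of Theorem 1 is nonnegative and finite for all real s with 0 \le s < \mu \min(\rho_1, 1), given \mu, \rho_1, \rho_2 > 0. -/
import Mathlib


noncomputable def mgfSP (μ ρ1 ρ2 s : ℝ) : ℝ :=
  let b := s / μ
  let ρ := ρ1 + ρ2
  let γ1 := ρ2^2*(4-6*b+4*b^2-b^3) + ρ2*(8-20*b+16*b^2-6*b^3+b^4) + (1-b)^3*(4-b)
  let γ2 := ρ2^2*(5-6*b+2*b^2) + ρ2*(12-22*b+14*b^2-3*b^3) + 3*(1-b)^2*(2-b)
  let γ3 := ρ2^2*(2-b) + ρ2*(8-10*b+3*b^2) + 3*b^2-7*b+4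
  let γ4 := ρ2*(2-b) + 1 - b
  (ρ1/(2*ρ1*ρ2+ρ+1)) *
    ((ρ2^2*(1-b)^2 + 2*ρ2*(1-b)^3 + (1-b)^4 + ρ1*γ1 + ρ1^2*γ2 + ρ1^3*γ3 + ρ1^4*γ4) /
      ((ρ1-b)*(1-b)^2*(1+ρ1-b)^2*(1+ρ-b)^2))

theorem mgfSP_nonneg (μ ρ1 ρ2 : ℝ) (hμ : 0 < μ) (h1 : 0 < ρ1) (h2 : 0 < ρ2) :
    ∀ s : ℝ, 0 ≤ s → s < μ * min ρ1 1 →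
      0 < (ρ1 - s/μ) * (1 - s/μ)^2 * (1 + ρ1 - s/μ)^2 * (1 + (ρ1+ρ2) - s/μ)^2 ∧
      0 ≤ mgfSP μ ρ1 ρ2 s := by
  intro s hs hslt
  set b := s / μ with hb
  have hb0 : 0 ≤ b := div_nonneg hs hμ.le
  have hbm : b < min ρ1 1 := (div_lt_iff₀ hμ).mpr (by linarith [mul_comm μ (min ρ1 1)])
  have hb1 : b < 1 := lt_of_lt_of_le hbm (min_le_right _ _)
  have hbρ : b < ρ1 := lt_of_lt_of_le hbm (min_le_left _ _)
  set u : ℝ := 1 - b with hu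
  have hu0 : 0 < u := by simp [hu]; linarith
  have hden : 0 < (ρ1 - b) * (1 - b)^2 * (1 + ρ1 - b)^2 * (1 + (ρ1+ρ2) - b)^2 := by
    apply mul_pos
    apply mul_pos
    apply mul_pos
    · linarith
    · positivity
    · have : (0:ℝ) < 1 + ρ1 - b := by linarith
      positivity
    · have : (0:ℝ) < 1 + (ρ1+ρ2) - b := by linarith
      positivity
  refine ⟨hden, ?_⟩
  show 0 ≤ (ρ1/(2*ρ1*ρ2+(ρ1+ρ2)+1)) *
    ((ρ2^2*(1-b)^2 + 2*ρ2*(1-b)^3 + (1-b)^4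
      + ρ1*(ρ2^2*(4-6*b+4*b^2-b^3) + ρ2*(8-20*b+16*b^2-6*b^3+b^4) + (1-b)^3*(4-b))
      + ρ1^2*(ρ2^2*(5-6*b+2*b^2) + ρ2*(12-22*b+14*b^2-3*b^3) + 3*(1-b)^2*(2-b))
      + ρ1^3*(ρ2^2*(2-b) + ρ2*(8-10*b+3*b^2) + 3*b^2-7*b+4)
      + ρ1^4*(ρ2*(2-b) + 1 - b)) /
      ((ρ1-b)*(1-b)^2*(1+ρ1-b)^2*(1+(ρ1+ρ2)-b)^2))
  have hnum : 0 ≤ ρ2^2*(1-b)^2 + 2*ρ2*(1-b)^3 + (1-b)^4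
      + ρ1*(ρ2^2*(4-6*b+4*b^2-b^3) + ρ2*(8-20*b+16*b^2-6*b^3+b^4) + (1-b)^3*(4-b))
      + ρ1^2*(ρ2^2*(5-6*b+2*b^2) + ρ2*(12-22*b+14*b^2-3*b^3) + 3*(1-b)^2*(2-b))
      + ρ1^3*(ρ2^2*(2-b) + ρ2*(8-10*b+3*b^2) + 3*b^2-7*b+4)
      + ρ1^4*(ρ2*(2-b) + 1 - b) := by
    have hid : ρ2^2*(1-b)^2 + 2*ρ2*(1-b)^3 + (1-b)^4
      + ρ1*(ρ2^2*(4-6*b+4*b^2-b^3) + ρ2*(8-20*b+16*b^2-6*b^3+b^4) + (1-b)^3*(4-b))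
      + ρ1^2*(ρ2^2*(5-6*b+2*b^2) + ρ2*(12-22*b+14*b^2-3*b^3) + 3*(1-b)^2*(2-b))
      + ρ1^3*(ρ2^2*(2-b) + ρ2*(8-10*b+3*b^2) + 3*b^2-7*b+4)
      + ρ1^4*(ρ2*(2-b) + 1 - b)
      = ρ1*ρ2*(ρ1 - b)
        + (u^4 + 2*ρ2*u^3 + ρ2^2*u^2
          + 3*ρ1*u^3 + ρ1*u^4 + ρ1*ρ2*u + 4*ρ1*ρ2*u^2 + 2*ρ1*ρ2*u^3 + ρ1*ρ2*u^4
          + ρ1*ρ2^2 + ρ1*ρ2^2*u + ρ1*ρ2^2*u^2 + ρ1*ρ2^2*u^3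
          + 3*ρ1^2*u^2 + 3*ρ1^2*u^3 + 3*ρ1^2*ρ2*u + 5*ρ1^2*ρ2*u^2 + 3*ρ1^2*ρ2*u^3
          + ρ1^2*ρ2^2 + 2*ρ1^2*ρ2^2*u + 2*ρ1^2*ρ2^2*u^2
          + ρ1^3*u + 3*ρ1^3*u^2 + ρ1^3*ρ2 + 4*ρ1^3*ρ2*u + 3*ρ1^3*ρ2*u^2
          + ρ1^3*ρ2^2 + ρ1^3*ρ2^2*u
          + ρ1^4*u + ρ1^4*ρ2*u + ρ1^4*ρ2) := by
      simp only [hu]; ring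
    rw [hid]
    have h3 : 0 < ρ1 - b := by linarith
    positivity
  apply mul_nonneg
  · positivity
  · exact div_nonneg hnum hden.le
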